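/- arXiv:2504.18640 — 4 statements merged into one kernel-verified Lean document; each statement's English description precedes it below -/
import Mathlib

section
/- Let u ≥ 2 and k ≥ u, and let G be a u-uniform k-circle-layered hypergraph with partitions V_1, ..., V_k. Suppose v_1, ..., v_k is a k-hypercycle in G that does not use exactly one vertex from each of the k partitions (equivalently, some partition contains none of the vertices v_1, ..., v_k). Then k ≡ 0 (mod u). -/
variable {V : Type} [DecidableEq V]

/-- The window of `u` cyclically consecutive vertices of the list `v` starting at index `i`
(indices in `ZMod k`). -/
def cycWindow (k u : ℕ) (v : ZMod k → V) (i : ZMod k) : Finset V :=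
  Finset.univ.image (fun t : Fin u => v (i + ((t : ℕ) : ZMod k)))

/-- `v` is a (tight) `k`-hypercycle in the `u`-uniform hypergraph with hyperedge set `E`:
a list of `k` distinct vertices all of whose `u`-windows of cyclically consecutive
vertices are hyperedges. -/
def IsHypercycle (k u : ℕ) (E : Set (Finset V)) (v : ZMod k → V) : Prop :=
  Function.Injective v ∧ ∀ i : ZMod k, cycWindow k u v i ∈ E

/-- A hypergraph with hyperedge set `E` is `k`-circle-layered with respect to the partition
function `P`: every hyperedge has exactly one vertex in each of `u` cyclically
consecutive partitions `V_i, V_{i+1}, ..., V_{i+u-1}`. -/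
def IsCircleLayered (k u : ℕ) (P : V → ZMod k) (E : Set (Finset V)) : Prop :=
  ∀ e ∈ E, ∃ i : ZMod k, ∀ t : Fin u, ∃! w, w ∈ e ∧ P w = i + ((t : ℕ) : ZMod k)

/-- If a `k`-hypercycle in a `u`-uniform `k`-circle-layered hypergraph misses some
partition (i.e. does not use exactly one vertex from each partition), then `u ∣ k`. -/
theorem stmt_2 (u k : ℕ) (hu : 2 ≤ u) (huk : u ≤ k)
    (P : V → ZMod k) (E : Set (Finset V))
    (hunif : ∀ e ∈ E, e.card = u)
    (hlay : IsCircleLayered k u P E)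
    (v : ZMod k → V) (hcyc : IsHypercycle k u E v)
    (hmiss : ∃ j : ZMod k, ∀ i : ZMod k, P (v i) ≠ j) :
    u ∣ k := by
  haveI : NeZero k := ⟨by omega⟩
  haveI : NeZero u := ⟨by omega⟩
  obtain ⟨hinj, hedge⟩ := hcyc
  obtain ⟨j, hj⟩ := hmiss
  choose s hs using fun i => hlay _ (hedge i)
  -- cast injectivity helpers
  have castinjk : ∀ a b : ℕ, a < k → b < k → ((a : ZMod k) = (b : ZMod k)) → a = b := by
    intro a b ha hb h
    have h2 := congrArg ZMod.val h
    rwa [ZMod.val_cast_of_lt ha, ZMod.val_cast_of_lt hb] at h2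
  have castinju : ∀ a b : ℕ, a < u → b < u → ((a : ZMod u) = (b : ZMod u)) → a = b := by
    intro a b ha hb h
    have h2 := congrArg ZMod.val h
    rwa [ZMod.val_cast_of_lt ha, ZMod.val_cast_of_lt hb] at h2
  set f : ZMod k → ZMod k := fun i => P (v i) with hfdef
  set A : ZMod k → Finset (ZMod k) :=
    fun i => Finset.univ.image (fun t : Fin u => f (i + ((t : ℕ) : ZMod k))) with hAdef
  set B : ZMod k → Finset (ZMod k) :=
    fun i => Finset.univ.image (fun t : Fin u => s i + ((t : ℕ) : ZMod k)) with hBdef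
  have hBcard : ∀ i, (B i).card = u := by
    intro i
    rw [hBdef]
    rw [Finset.card_image_of_injective _ ?_, Finset.card_univ, Fintype.card_fin]
    intro a b hab
    have h : ((a : ℕ) : ZMod k) = ((b : ℕ) : ZMod k) := add_left_cancel hab
    exact Fin.ext (castinjk _ _ (lt_of_lt_of_le a.isLt huk) (lt_of_lt_of_le b.isLt huk) h)
  have hBA : ∀ i, B i ⊆ A i := by
    intro i x hx
    simp only [hBdef, Finset.mem_image, Finset.mem_univ, true_and] at hx
    obtain ⟨t, ht⟩ := hx
    obtain ⟨w, ⟨hw1, hw2⟩, -⟩ := hs i t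
    simp only [cycWindow, Finset.mem_image, Finset.mem_univ, true_and] at hw1
    obtain ⟨t', ht'⟩ := hw1
    simp only [hAdef, Finset.mem_image, Finset.mem_univ, true_and]
    exact ⟨t', by simp only [hfdef]; rw [ht', hw2, ht]⟩
  have hAB : ∀ i, A i = B i := by
    intro i
    refine (Finset.eq_of_subset_of_card_le (hBA i) ?_).symm
    rw [hBcard i]
    calc (A i).card ≤ (Finset.univ : Finset (Fin u)).card := Finset.card_image_le
      _ = u := by simp
  have hAinj : ∀ i, Set.InjOn (fun t : Fin u => f (i + ((t : ℕ) : ZMod k)))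
      (Finset.univ : Finset (Fin u)) := by
    intro i
    rw [← Finset.card_image_iff]
    have : (Finset.univ.image (fun t : Fin u => f (i + ((t : ℕ) : ZMod k)))) = A i := rfl
    rw [this, hAB i, hBcard i]
    simp
  set G : ZMod k → ℕ := fun x => (x - j).val with hGdef
  have hBne : ∀ i, ∀ x ∈ B i, x ≠ j := by
    intro i x hx
    rw [← hAB] at hx
    simp only [hAdef, Finset.mem_image, Finset.mem_univ, true_and] at hx
    obtain ⟨t, ht⟩ := hx
    rw [← ht]
    exact hj _
  have hcastval : ∀ x : ZMod k, ((x - j).val : ZMod k) = x - j := fun x =>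
    ZMod.natCast_rightInverse _
  have hσ : ∀ i, G (s i) + u ≤ k := by
    intro i
    by_contra hcon
    push_neg at hcon
    have hv : G (s i) < k := ZMod.val_lt _
    have ht1 : 1 ≤ k - G (s i) := by omega
    have htu : k - G (s i) < u := by omega
    have hmem : s i + (((k - G (s i) : ℕ)) : ZMod k) ∈ B i := by
      simp only [hBdef, Finset.mem_image, Finset.mem_univ, true_and]
      exact ⟨⟨k - G (s i), htu⟩, rfl⟩
    refine hBne i _ hmem ?_
    have h2 : s i + (((k - G (s i) : ℕ)) : ZMod k) - j
        = ((G (s i) + (k - G (s i)) : ℕ) : ZMod k) := by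
      push_cast
      rw [hGdef]
      simp only
      rw [hcastval (s i)]
      ring
    have h3 : G (s i) + (k - G (s i)) = k := by omega
    rw [h3, ZMod.natCast_self] at h2
    have := sub_eq_zero.mp h2
    exact this
  have hGval : ∀ i, ∀ t : ℕ, t < u → G (s i + ((t : ℕ) : ZMod k)) = G (s i) + t := by
    intro i t ht
    have h1 : s i + ((t : ℕ) : ZMod k) - j = ((G (s i) + t : ℕ) : ZMod k) := by
      push_cast
      rw [hGdef]
      simp only
      rw [hcastval (s i)]
      ring
    have h2 : G (s i) + t < k := by have := hσ i; omega
    rw [hGdef]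
    simp only
    rw [h1, ZMod.val_cast_of_lt h2]
  set r : ZMod k → ZMod u := fun i => ((G (f i) : ℕ) : ZMod u) with hrdef
  have hsum : ∀ i, ∑ t ∈ Finset.range u, r (i + ((t : ℕ) : ZMod k))
      = ∑ t ∈ Finset.range u, ((t : ℕ) : ZMod u) := by
    intro i
    rw [← Fin.sum_univ_eq_sum_range, ← Fin.sum_univ_eq_sum_range]
    have injA : ∀ x ∈ (Finset.univ : Finset (Fin u)), ∀ y ∈ (Finset.univ : Finset (Fin u)),
        f (i + ((x : ℕ) : ZMod k)) = f (i + ((y : ℕ) : ZMod k)) → x = y :=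
      fun x hx y hy h => hAinj i (Finset.mem_coe.mpr hx) (Finset.mem_coe.mpr hy) h
    have injB : ∀ x ∈ (Finset.univ : Finset (Fin u)), ∀ y ∈ (Finset.univ : Finset (Fin u)),
        s i + ((x : ℕ) : ZMod k) = s i + ((y : ℕ) : ZMod k) → x = y := by
      intro x _ y _ h
      exact Fin.ext (castinjk _ _ (lt_of_lt_of_le x.isLt huk) (lt_of_lt_of_le y.isLt huk)
        (add_left_cancel h))
    have e1 := Finset.sum_image (s := (Finset.univ : Finset (Fin u)))
      (f := fun x : ZMod k => ((G x : ℕ) : ZMod u))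
      (g := fun t : Fin u => f (i + ((t : ℕ) : ZMod k))) injA
    have e3 := Finset.sum_image (s := (Finset.univ : Finset (Fin u)))
      (f := fun x : ZMod k => ((G x : ℕ) : ZMod u))
      (g := fun t : Fin u => s i + ((t : ℕ) : ZMod k)) injB
    have hABim : Finset.univ.image (fun t : Fin u => f (i + ((t : ℕ) : ZMod k)))
        = Finset.univ.image (fun t : Fin u => s i + ((t : ℕ) : ZMod k)) := hAB i
    calc ∑ t : Fin u, r (i + ((t : ℕ) : ZMod k))
        = ∑ t : Fin u, ((G (f (i + ((t : ℕ) : ZMod k))) : ℕ) : ZMod u) := rfl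
      _ = ∑ x ∈ Finset.univ.image (fun t : Fin u => f (i + ((t : ℕ) : ZMod k))),
            ((G x : ℕ) : ZMod u) := e1.symm
      _ = ∑ x ∈ Finset.univ.image (fun t : Fin u => s i + ((t : ℕ) : ZMod k)),
            ((G x : ℕ) : ZMod u) := by rw [hABim]
      _ = ∑ t : Fin u, ((G (s i + ((t : ℕ) : ZMod k)) : ℕ) : ZMod u) := e3
      _ = ∑ t : Fin u, (((G (s i) : ℕ) : ZMod u) + ((t : ℕ) : ZMod u)) := by
            refine Finset.sum_congr rfl fun t _ => ?_
            rw [hGval i t t.isLt]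
            push_cast
            ring
      _ = ∑ t : Fin u, ((t : ℕ) : ZMod u) := by
            rw [Finset.sum_add_distrib, Finset.sum_const]
            simp [nsmul_eq_mul, ZMod.natCast_self]
  have hstep : ∀ i : ZMod k, r (i + ((u : ℕ) : ZMod k)) = r i := by
    intro i
    have h1 := hsum i
    have h2 := hsum (i + 1)
    have e : ∀ t : ℕ, i + 1 + ((t : ℕ) : ZMod k) = i + (((t + 1 : ℕ)) : ZMod k) := by
      intro t; push_cast; ring
    rw [Finset.sum_congr rfl (fun t _ => by rw [e t])] at h2
    have h3 : ∑ t ∈ Finset.range (u + 1), r (i + ((t : ℕ) : ZMod k))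
        = (∑ t ∈ Finset.range u, r (i + (((t + 1 : ℕ)) : ZMod k)))
          + r (i + ((0 : ℕ) : ZMod k)) :=
      Finset.sum_range_succ' _ u
    rw [Finset.sum_range_succ, h1, h2] at h3
    simp only [Nat.cast_zero, add_zero] at h3
    exact add_left_cancel h3
  have hiter : ∀ z : ℤ, ∀ i : ZMod k, r (i + (z : ZMod k) * ((u : ℕ) : ZMod k)) = r i := by
    intro z
    induction z using Int.induction_on with
    | zero => intro i; simp
    | succ n ih =>
      intro i
      have e : i + (((n : ℤ) + 1 : ℤ) : ZMod k) * ((u : ℕ) : ZMod k)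
          = (i + ((n : ℤ) : ZMod k) * ((u : ℕ) : ZMod k)) + ((u : ℕ) : ZMod k) := by
        push_cast; ring
      rw [e, hstep, ih]
    | pred n ih =>
      intro i
      have e : (i + ((-(n : ℤ) - 1 : ℤ) : ZMod k) * ((u : ℕ) : ZMod k)) + ((u : ℕ) : ZMod k)
          = i + ((-(n : ℤ) : ℤ) : ZMod k) * ((u : ℕ) : ZMod k) := by
        push_cast; ring
      have h := hstep (i + ((-(n : ℤ) - 1 : ℤ) : ZMod k) * ((u : ℕ) : ZMod k))
      rw [e, ih] at h
      exact h.symm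
  have hdistinct : ∀ i : ZMod k, ∀ a b : Fin u,
      r (i + ((a : ℕ) : ZMod k)) = r (i + ((b : ℕ) : ZMod k)) → a = b := by
    intro i a b hr
    have hmem : ∀ t : Fin u, ∃ t' : Fin u,
        f (i + ((t : ℕ) : ZMod k)) = s i + ((t' : ℕ) : ZMod k) := by
      intro t
      have hm : f (i + ((t : ℕ) : ZMod k)) ∈ A i := by
        simp only [hAdef, Finset.mem_image, Finset.mem_univ, true_and]
        exact ⟨t, rfl⟩
      rw [hAB i] at hm
      simp only [hBdef, Finset.mem_image, Finset.mem_univ, true_and] at hm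
      obtain ⟨t', ht'⟩ := hm
      exact ⟨t', ht'.symm⟩
    obtain ⟨ta, hta⟩ := hmem a
    obtain ⟨tb, htb⟩ := hmem b
    have hra : r (i + ((a : ℕ) : ZMod k)) = ((G (s i) + (ta : ℕ) : ℕ) : ZMod u) := by
      rw [hrdef]; simp only; rw [hta, hGval i ta ta.isLt]
    have hrb : r (i + ((b : ℕ) : ZMod k)) = ((G (s i) + (tb : ℕ) : ℕ) : ZMod u) := by
      rw [hrdef]; simp only; rw [htb, hGval i tb tb.isLt]
    rw [hra, hrb] at hr
    push_cast at hr
    have hcast : ((ta : ℕ) : ZMod u) = ((tb : ℕ) : ZMod u) := add_left_cancel hr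
    have hteq : ta = tb := Fin.ext (castinju _ _ ta.isLt tb.isLt hcast)
    have hfeq : f (i + ((a : ℕ) : ZMod k)) = f (i + ((b : ℕ) : ZMod k)) := by
      rw [hta, htb, hteq]
    exact hAinj i (Finset.mem_coe.mpr (Finset.mem_univ a))
      (Finset.mem_coe.mpr (Finset.mem_univ b)) hfeq
  by_contra hndvd
  have hgd_u : Nat.gcd u k ∣ u := Nat.gcd_dvd_left u k
  have hgd_k : Nat.gcd u k ∣ k := Nat.gcd_dvd_right u k
  have hg_lt : Nat.gcd u k < u := by
    rcases lt_or_eq_of_le (Nat.le_of_dvd (by omega) hgd_u) with h | h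
    · exact h
    · exact absurd (h ▸ hgd_k) hndvd
  have hg_pos : 0 < Nat.gcd u k := Nat.gcd_pos_of_pos_left k (by omega)
  have hbez : ((Nat.gcd u k : ℕ) : ZMod k)
      = ((Nat.gcdA u k : ℤ) : ZMod k) * ((u : ℕ) : ZMod k) := by
    have h := Nat.gcd_eq_gcd_ab u k
    have h2 : (((Nat.gcd u k : ℤ)) : ZMod k)
        = (((u : ℤ) * Nat.gcdA u k + (k : ℤ) * Nat.gcdB u k : ℤ) : ZMod k) :=
      congrArg (fun z : ℤ => ((z : ℤ) : ZMod k)) h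
    push_cast at h2
    rw [ZMod.natCast_self, zero_mul, add_zero] at h2
    rw [h2]; ring
  have h0 := hiter (Nat.gcdA u k) 0
  rw [zero_add, ← hbez] at h0
  have hfin := hdistinct 0 ⟨0, by omega⟩ ⟨Nat.gcd u k, hg_lt⟩ (by simpa using h0.symm)
  have : (0 : ℕ) = Nat.gcd u k := congrArg Fin.val hfin
  omega
end

section
/- Let 2 ≤ u' < u < k, where k is divisible by neither u nor u'. Let G = (V, E) be a u'-uniform k-circle-layered hypergraph with partitions V_1, ..., V_k. Define the u-uniform k-circle-layered hypergraph G' = (V, E') on the same vertex set and partitions by declaring, for every i and every choice of vertices v_i ∈ V_i, v_{i+1} ∈ V_{i+1}, ..., v_{i+u-1} ∈ V_{i+u-1} (indices modulo k), that {v_i, ..., v_{i+u-1}} ∈ E' if and only if {v_i, ..., v_{i+u'-1}} ∈ E. Then G' contains a k-hypercycle if and only if G contains a k-hypercycle. -/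
set_option linter.unusedSectionVars false

section helpers

lemma card_eq_of_le_one {α β : Type*} {s : Finset α} {t : Finset β}
    (hs : s.card ≤ 1) (ht : t.card ≤ 1) (h : s.Nonempty ↔ t.Nonempty) : s.card = t.card := by
  by_cases h0 : s.Nonempty
  · have h1 := Finset.card_pos.mpr h0
    have h2 := Finset.card_pos.mpr (h.mp h0)
    omega
  · have h1 : s.card = 0 := by
      rw [Finset.card_eq_zero, ← Finset.not_nonempty_iff_eq_empty]; exact h0
    have h2 : t.card = 0 := by
      rw [Finset.card_eq_zero, ← Finset.not_nonempty_iff_eq_empty]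
      exact fun ht' => h0 (h.mpr ht')
    omega

end helpers

lemma bij_of_fiber_one {α β : Type*} [Fintype α] [DecidableEq α] [DecidableEq β] (g : α → β)
    (h : ∀ c, (Finset.univ.filter (fun i => g i = c)).card = 1) : Function.Bijective g := by
  constructor
  · intro a b hab
    have h1 : a ∈ Finset.univ.filter (fun i => g i = g b) := by
      simp [Finset.mem_filter, hab]
    have h2 : b ∈ Finset.univ.filter (fun i => g i = g b) := by simp
    exact Finset.card_le_one.mp (le_of_eq (h (g b))) a h1 b h2
  · intro c
    have := h c
    rw [Finset.card_eq_one] at this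
    obtain ⟨a, ha⟩ := this
    have : a ∈ Finset.univ.filter (fun i => g i = c) := ha ▸ Finset.mem_singleton_self a
    exact ⟨a, (Finset.mem_filter.mp this).2⟩


section case1
variable {k u : ℕ} [NeZero k]

lemma case_ksucc (hu : 2 ≤ u) (hk : k = u + 1)
    (f j : ZMod k → ZMod k)
    (H1 : ∀ i : ZMod k, Function.Injective fun t : Fin u => f (i + ((t : ℕ) : ZMod k)))
    (H2 : ∀ i x, (∃ t : Fin u, f (i + ((t : ℕ) : ZMod k)) = x) ↔ (x - j i).val < u) :
    Function.Bijective f ∧ Function.Bijective j := by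
  have hukk : u < k := by omega
  have hcastu : ((u : ℕ) : ZMod k) = -1 := by
    have : ((u : ℕ) : ZMod k) + 1 = ((k : ℕ) : ZMod k) := by
      rw [hk]; push_cast; ring
    rw [ZMod.natCast_self] at this
    linear_combination this
  have hinj : Function.Injective f := by
    intro a b hab
    by_contra hne
    have hcard : (({a, b} : Finset (ZMod k))ᶜ).Nonempty := by
      rw [← Finset.card_pos, Finset.card_compl]
      have h1 : ({a, b} : Finset (ZMod k)).card ≤ 2 := by
        apply le_trans (Finset.card_insert_le _ _)
        simp
      have h2 : Fintype.card (ZMod k) = k := ZMod.card k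
      omega
    obtain ⟨m, hm'⟩ := hcard
    have hm := Finset.mem_compl.mp hm'
    simp only [Finset.mem_insert, Finset.mem_singleton, not_or] at hm
    -- t values
    have hval : ∀ x : ZMod k, x ≠ m → (x - (m + 1)).val < u := by
      intro x hx
      have h1 : (x - (m+1)).val < k := ZMod.val_lt _
      rcases Nat.lt_or_ge (x - (m+1)).val u with h | h
      · exact h
      · exfalso
        have h2 : (x - (m+1)).val = u := by omega
        have h3 : x - (m+1) = ((u : ℕ) : ZMod k) := by
          conv_lhs => rw [← ZMod.natCast_rightInverse (x - (m+1))]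
          rw [h2]
        rw [hcastu] at h3
        apply hx
        linear_combination h3
    have ha := hval a (fun h => hm.1 h.symm)
    have hb := hval b (fun h => hm.2 h.symm)
    have heqa : m + 1 + (((a - (m+1)).val : ℕ) : ZMod k) = a := by
      rw [ZMod.natCast_rightInverse (a - (m+1))]; ring
    have heqb : m + 1 + (((b - (m+1)).val : ℕ) : ZMod k) = b := by
      rw [ZMod.natCast_rightInverse (b - (m+1))]; ring
    have := H1 (m + 1) (a₁ := ⟨_, ha⟩) (a₂ := ⟨_, hb⟩) (by simp only; rw [heqa, heqb]; exact hab)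
    rw [Fin.mk.injEq] at this
    apply hne
    rw [← heqa, ← heqb, this]
  have hfb : Function.Bijective f := Finite.injective_iff_bijective.mp hinj
  have hji : ∀ i : ZMod k, j i = f (i - 1) + 1 := by
    intro i
    have hkey : f (i - 1) = j i - 1 := by
      by_contra hne
      have hval : (f (i-1) - j i).val < u := by
        have h1 : (f (i-1) - j i).val < k := ZMod.val_lt _
        rcases Nat.lt_or_ge (f (i-1) - j i).val u with h | h
        · exact h
        · exfalso
          have h2 : (f (i-1) - j i).val = u := by omega
          have h3 : f (i-1) - j i = ((u : ℕ) : ZMod k) := by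
            conv_lhs => rw [← ZMod.natCast_rightInverse (f (i-1) - j i)]
            rw [h2]
          rw [hcastu] at h3
          exact hne (by linear_combination h3)
      obtain ⟨t, ht⟩ := (H2 i (f (i-1))).mpr hval
      have := hinj ht
      have h4 : ((t : ℕ) : ZMod k) = ((u : ℕ) : ZMod k) := by
        rw [hcastu]
        linear_combination this
      have h5 := congrArg ZMod.val h4
      rw [ZMod.val_cast_of_lt (lt_trans t.isLt hukk), ZMod.val_cast_of_lt hukk] at h5
      exact absurd h5 (Nat.ne_of_lt t.isLt)
    linear_combination -hkey
  refine ⟨hfb, ?_, ?_⟩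
  · intro a b hab
    rw [hji a, hji b] at hab
    have := hfb.1 (by linear_combination hab : f (a - 1) = f (b - 1))
    linear_combination this
  · intro c
    obtain ⟨i0, hi0⟩ := hfb.2 (c - 1)
    exact ⟨i0 + 1, by rw [hji]; simp [hi0]⟩

end case1

section main
variable {k u : ℕ} [NeZero k]

lemma card_Iv (hu : u ≤ k) (a : ZMod k) :
    (Finset.univ.filter (fun x : ZMod k => (x - a).val < u)).card = u := by
  apply Finset.card_eq_of_bijective (fun i hi => a + (i : ZMod k))
  · intro x hx
    rw [Finset.mem_filter] at hx
    exact ⟨(x - a).val, hx.2, by rw [ZMod.natCast_rightInverse (x - a)]; ring⟩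
  · intro i hi
    rw [Finset.mem_filter]
    refine ⟨Finset.mem_univ _, ?_⟩
    have heq : a + (i : ZMod k) - a = (i : ZMod k) := by ring
    rw [heq, ZMod.val_cast_of_lt (lt_of_lt_of_le hi hu)]
    exact hi
  · intro i j hi hj hij
    have heq : (i : ZMod k) = (j : ZMod k) := by
      have := hij
      simpa using this
    have := congrArg ZMod.val heq
    rwa [ZMod.val_cast_of_lt (lt_of_lt_of_le hi hu),
      ZMod.val_cast_of_lt (lt_of_lt_of_le hj hu)] at this


lemma step_lemma (hu : 2 ≤ u) (hk2 : u + 2 ≤ k)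
    (f j : ZMod k → ZMod k)
    (H1 : ∀ i : ZMod k, Function.Injective fun t : Fin u => f (i + ((t : ℕ) : ZMod k)))
    (H2 : ∀ i x, (∃ t : Fin u, f (i + ((t : ℕ) : ZMod k)) = x) ↔ (x - j i).val < u)
    (i : ZMod k) :
    (j (i+1) - j i).val = 0 ∨ (j (i+1) - j i).val = 1 ∨ (j (i+1) - j i).val = k - 1 := by
  have huk : u < k := by omega
  by_contra hcon
  push_neg at hcon
  set d := (j (i+1) - j i).val with hd
  have hd0 : d < k := ZMod.val_lt _
  have hd2 : 2 ≤ d ∧ d ≤ k - 2 := by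
    refine ⟨?_, ?_⟩ <;> [skip; skip] <;> omega
  set y := max u d with hy
  have hyfacts : u ≤ y ∧ d ≤ y ∧ y + 1 ≤ k - 1 := by omega
  have hsubfact : ∀ s : ℕ, s ≤ 1 → y + s - d < u := by
    intro s hs
    rcases Nat.le_total d u with h | h
    · have : y = u := by omega
      omega
    · have : y = d := by omega
      omega
  have hjj : j (i + 1) = j i + ((d : ℕ) : ZMod k) := by
    rw [hd, ZMod.natCast_rightInverse (j (i+1) - j i)]; ring
  -- the witnesses
  set w : ℕ → ZMod k := fun s => j i + ((y + s : ℕ) : ZMod k) with hw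
  have hwI : ∀ s : ℕ, s ≤ 1 → ¬ ((w s - j i).val < u) := by
    intro s hs
    have heq : w s - j i = ((y + s : ℕ) : ZMod k) := by rw [hw]; ring
    rw [heq, ZMod.val_cast_of_lt (by omega : y + s < k)]
    omega
  have hwI1 : ∀ s : ℕ, s ≤ 1 → (w s - j (i+1)).val < u := by
    intro s hs
    have heq : w s - j (i+1) = ((y + s - d : ℕ) : ZMod k) := by
      rw [hw, hjj, Nat.cast_sub (by omega : d ≤ y + s)]
      push_cast
      ring
    rw [heq, ZMod.val_cast_of_lt (by omega : y + s - d < k)]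
    exact hsubfact s hs
  have hw01 : w 0 ≠ w 1 := by
    intro hcontra
    have h0 : ((y + 0 : ℕ) : ZMod k) = ((y + 1 : ℕ) : ZMod k) := by
      have := hcontra
      rw [hw] at this
      simpa using this
    have := congrArg ZMod.val h0
    rw [ZMod.val_cast_of_lt (by omega : y + 0 < k), ZMod.val_cast_of_lt (by omega : y + 1 < k)] at this
    omega
  -- common values
  set T := (Finset.univ.filter (fun x : ZMod k => (x - j (i+1)).val < u)) \ {w 0, w 1} with hT
  have hTcard : T.card = u - 2 := by
    rw [hT, Finset.card_sdiff_of_subset]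
    · rw [card_Iv (by omega), Finset.card_insert_of_notMem (by simp [hw01]),
        Finset.card_singleton]
    · intro x hx
      simp only [Finset.mem_insert, Finset.mem_singleton] at hx
      rw [Finset.mem_filter]
      rcases hx with h | h <;> subst h <;>
        exact ⟨Finset.mem_univ _, by first | exact hwI1 0 (by omega) | exact hwI1 1 (by omega)⟩
  -- the injection
  have hmap : ∀ t : Fin (u-1), f (i + 1 + ((t : ℕ) : ZMod k)) ∈ T := by
    intro t
    have hIi : (f (i + 1 + ((t : ℕ) : ZMod k)) - j i).val < u := by
      apply (H2 i _).mp
      refine ⟨⟨(t : ℕ) + 1, by omega⟩, ?_⟩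
      simp only
      congr 1
      push_cast
      ring
    have hIi1 : (f (i + 1 + ((t : ℕ) : ZMod k)) - j (i+1)).val < u := by
      apply (H2 (i+1) _).mp
      exact ⟨⟨(t : ℕ), by omega⟩, rfl⟩
    rw [hT, Finset.mem_sdiff]
    refine ⟨Finset.mem_filter.mpr ⟨Finset.mem_univ _, hIi1⟩, ?_⟩
    simp only [Finset.mem_insert, Finset.mem_singleton, not_or]
    constructor
    · intro hcontra
      exact hwI 0 (by omega) (hcontra ▸ hIi)
    · intro hcontra
      exact hwI 1 (by omega) (hcontra ▸ hIi)
  have hinj : ∀ t1 t2 : Fin (u-1), f (i + 1 + ((t1 : ℕ) : ZMod k)) = f (i + 1 + ((t2 : ℕ) : ZMod k)) → t1 = t2 := by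
    intro t1 t2 h12
    have := H1 (i+1) (a₁ := ⟨(t1 : ℕ), by omega⟩) (a₂ := ⟨(t2 : ℕ), by omega⟩) (by simpa using h12)
    rw [Fin.mk.injEq] at this
    exact Fin.ext this
  have hle : (Finset.univ : Finset (Fin (u-1))).card ≤ T.card := by
    exact Finset.card_le_card_of_injOn (fun t => f (i + 1 + ((t : ℕ) : ZMod k)))
      (fun t _ => hmap t) (fun t1 _ t2 _ h12 => hinj t1 t2 h12)
  rw [Finset.card_univ, Fintype.card_fin, hTcard] at hle
  omega

lemma intCast_emod_zmod (a : ℤ) : ((a % (k:ℤ) : ℤ) : ZMod k) = (a : ZMod k) := by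
  push_cast [Int.emod_def]
  ring_nf
  simp [ZMod.natCast_self]

section walk

variable (D : ℕ → ℤ)

def Wsum (n : ℕ) : ℤ := ∑ m ∈ Finset.range n, D m

lemma Wsum_succ (n : ℕ) : Wsum D (n+1) = Wsum D n + D n := Finset.sum_range_succ D n

lemma Wsum_abs_diff (hD : ∀ n, |D n| ≤ 1) :
    ∀ a b : ℕ, a ≤ b → |Wsum D b - Wsum D a| ≤ (b : ℤ) - a := by
  intro a b hab
  obtain ⟨t, rfl⟩ := Nat.le.dest hab
  induction t with
  | zero => simp
  | succ n ih =>
    have h1 : a + (n+1) = (a + n) + 1 := by omega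
    rw [h1, Wsum_succ]
    calc |Wsum D (a+n) + D (a+n) - Wsum D a| ≤ |Wsum D (a+n) - Wsum D a| + |D (a+n)| := by
          have := abs_add_le (Wsum D (a+n) - Wsum D a) (D (a+n))
          rw [show Wsum D (a+n) + D (a+n) - Wsum D a = Wsum D (a+n) - Wsum D a + D (a+n) by ring]
          exact this
    _ ≤ ((a+n : ℕ) : ℤ) - a + 1 := add_le_add (ih (by omega)) (hD _)
    _ = ((a+n+1 : ℕ) : ℤ) - a := by push_cast; ring

end walk

lemma case_big (hu : 2 ≤ u) (hk2 : u + 2 ≤ k) (hnd : ¬ u ∣ k)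
    (f j : ZMod k → ZMod k)
    (step : ∀ i : ZMod k, (j (i+1) - j i).val = 0 ∨ (j (i+1) - j i).val = 1 ∨ (j (i+1) - j i).val = k - 1)
    (key : ∀ c : ZMod k, u * (Finset.univ.filter (fun i => f i = c)).card
        = ∑ t ∈ Finset.range u, (Finset.univ.filter (fun i => j i = c - (t : ZMod k))).card)
    (bij_of_fiber_one : ∀ (g : ZMod k → ZMod k),
        (∀ c, (Finset.univ.filter (fun i => g i = c)).card = 1) → Function.Bijective g) :
    Function.Bijective f ∧ Function.Bijective j := by
  have huk : u < k := by omega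
  have hk0 : 0 < k := by omega
  set N : ZMod k → ℕ := fun c => (Finset.univ.filter (fun i => f i = c)).card with hN
  set M : ZMod k → ℕ := fun c => (Finset.univ.filter (fun i => j i = c)).card with hM
  have key' : ∀ c : ZMod k, u * N c = ∑ t ∈ Finset.range u, M (c - (t : ZMod k)) := key
  have hsumM : ∑ c : ZMod k, M c = k := by
    have h1 : (Finset.univ : Finset (ZMod k)).card
        = ∑ c ∈ Finset.univ, (Finset.univ.filter (fun i => j i = c)).card :=
      Finset.card_eq_sum_card_fiberwise (fun x _ => Finset.mem_univ (j x))
    rw [Finset.card_univ, ZMod.card] at h1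
    exact h1.symm
  have hmone : ((k - 1 : ℕ) : ZMod k) = -1 := by
    rw [Nat.cast_sub (by omega : 1 ≤ k)]
    rw [ZMod.natCast_self]
    simp
  -- the step function
  set D : ℕ → ℤ := fun n => if (j ((n : ZMod k) + 1) - j (n : ZMod k)).val = 1 then 1
    else if (j ((n : ZMod k) + 1) - j (n : ZMod k)).val = k - 1 then -1 else 0 with hD
  have hDval : ∀ n, D n = 1 ∨ D n = 0 ∨ D n = -1 := by
    intro n; rw [hD]; simp only; split_ifs <;> simp
  have hDabs : ∀ n, |D n| ≤ 1 := by
    intro n; rcases hDval n with h | h | h <;> rw [h] <;> simp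
  have hDcast : ∀ n : ℕ, j ((n : ZMod k) + 1) = j (n : ZMod k) + ((D n : ℤ) : ZMod k) := by
    intro n
    have hrec : j ((n:ZMod k)+1) - j (n:ZMod k)
        = (((j ((n:ZMod k)+1) - j (n:ZMod k)).val : ℕ) : ZMod k) :=
      (ZMod.natCast_rightInverse _).symm
    rcases step (n : ZMod k) with h | h | h
    · have hDn : D n = 0 := by rw [hD]; simp only; rw [if_neg (by omega), if_neg (by omega)]
      rw [hDn]
      rw [h] at hrec
      push_cast at hrec ⊢
      linear_combination hrec
    · have hDn : D n = 1 := by rw [hD]; simp only; rw [if_pos h]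
      rw [hDn]
      rw [h] at hrec
      push_cast at hrec ⊢
      linear_combination hrec
    · have hDn : D n = -1 := by rw [hD]; simp only; rw [if_neg (by omega), if_pos h]
      rw [hDn]
      rw [h, hmone] at hrec
      push_cast
      linear_combination hrec
  set W : ℕ → ℤ := Wsum D with hW
  have hWsucc : ∀ n, W (n+1) = W n + D n := fun n => Wsum_succ D n
  have hW0 : W 0 = 0 := by simp [hW, Wsum]
  have hWcast : ∀ n : ℕ, j ((n : ℕ) : ZMod k) = j 0 + ((W n : ℤ) : ZMod k) := by
    intro n
    induction n with
    | zero => rw [hW0]; simp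
    | succ n ih =>
      have hcast : ((n+1 : ℕ) : ZMod k) = ((n : ℕ) : ZMod k) + 1 := by push_cast; ring
      rw [hcast, hDcast n, ih, hWsucc]
      push_cast
      ring
  have hWkz : ((W k : ℤ) : ZMod k) = 0 := by
    have h1 := hWcast k
    rw [ZMod.natCast_self] at h1
    linear_combination -h1
  have hWk : W k = 0 ∨ W k = k ∨ W k = -(k:ℤ) := by
    obtain ⟨c, hc⟩ := (ZMod.intCast_zmod_eq_zero_iff_dvd _ k).mp hWkz
    have habs : |W k| ≤ (k:ℤ) := by
      have h2 := Wsum_abs_diff D hDabs 0 k (by omega)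
      rw [← hW, hW0] at h2
      simpa using h2
    have hcb : c = 0 ∨ c = 1 ∨ c = -1 := by
      by_contra hcon
      push_neg at hcon
      have h2 : 2 ≤ |c| := by
        rcases abs_cases c with ⟨h, _⟩ | ⟨h, _⟩ <;> omega
      have h3 : (k:ℤ) * 2 ≤ (k:ℤ) * |c| :=
        mul_le_mul_of_nonneg_left h2 (by positivity)
      rw [hc, abs_mul, abs_of_nonneg (by positivity : (0:ℤ) ≤ (k:ℤ))] at habs
      omega
    rcases hcb with h | h | h <;> rw [hc, h] <;> simp
  -- helper for the monotone cases
  have monotone_case : ∀ b : ZMod k, ∀ s : Bool,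
      (∀ i : ZMod k, j i = if s then b + i else b - i) →
      Function.Bijective f ∧ Function.Bijective j := by
    intro b s hjl
    have hM1 : ∀ c, M c = 1 := by
      intro c
      rw [hM]
      simp only [hjl]
      rw [Finset.card_eq_one]
      refine ⟨if s then c - b else b - c, ?_⟩
      ext x
      simp only [Finset.mem_filter, Finset.mem_univ, true_and, Finset.mem_singleton]
      cases s
      · simp only [Bool.false_eq_true, if_false]
        constructor
        · intro h; linear_combination -h
        · intro h; rw [h]; ring
      · simp only [if_true]
        constructor
        · intro h; linear_combination h
        · intro h; rw [h]; ring
    have hN1 : ∀ c, N c = 1 := by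
      intro c
      have hk1 := key' c
      have h2 : ∑ t ∈ Finset.range u, M (c - (t : ZMod k)) = u :=
        (Finset.sum_congr rfl (fun t _ => hM1 _)).trans (by simp)
      rw [h2] at hk1
      have := Nat.eq_of_mul_eq_mul_left (show 0 < u by omega) (hk1.trans (by ring : u = u * 1))
      exact this
    exact ⟨bij_of_fiber_one f hN1, bij_of_fiber_one j hM1⟩
  rcases hWk with hT | hT | hT
  · -- contradiction case
    exfalso
    obtain ⟨pm, hpmem, hpmax⟩ := Finset.exists_max_image (Finset.range (k+1)) W
      ⟨0, Finset.mem_range.mpr (by omega)⟩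
    obtain ⟨qm, hqmem, hqmin⟩ := Finset.exists_min_image (Finset.range (k+1)) W
      ⟨0, Finset.mem_range.mpr (by omega)⟩
    rw [Finset.mem_range] at hpmem hqmem
    set Mx := W pm with hMx
    set mn := W qm with hmn
    have hple : ∀ n ≤ k, W n ≤ Mx := fun n hn => hpmax n (Finset.mem_range.mpr (by omega))
    have hqle : ∀ n ≤ k, mn ≤ W n := fun n hn => hqmin n (Finset.mem_range.mpr (by omega))
    have hmn0 : mn ≤ 0 := by have := hqle 0 (by omega); rwa [hW0] at this
    have hMx0 : 0 ≤ Mx := by have := hple 0 (by omega); rwa [hW0] at this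
    have habsd : ∀ a b : ℕ, a ≤ b → |W b - W a| ≤ (b : ℤ) - a := Wsum_abs_diff D hDabs
    have hrange : 2 * (Mx - mn) ≤ (k:ℤ) := by
      rcases le_total pm qm with hpq | hpq
      · have h1 := abs_le.mp (habsd pm qm hpq)
        have h2 := abs_le.mp (habsd 0 pm (by omega))
        have h3 := abs_le.mp (habsd qm k (by omega))
        rw [hW0] at h2
        rw [hT] at h3
        push_cast at h1 h2 h3
        rw [← hMx, ← hmn] at *
        linarith [h1.1, h1.2, h2.1, h2.2, h3.1, h3.2]
      · have h1 := abs_le.mp (habsd qm pm hpq)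
        have h2 := abs_le.mp (habsd 0 qm (by omega))
        have h3 := abs_le.mp (habsd pm k (by omega))
        rw [hW0] at h2
        rw [hT] at h3
        push_cast at h1 h2 h3
        rw [← hMx, ← hmn] at *
        linarith [h1.1, h1.2, h2.1, h2.2, h3.1, h3.2]
    set R := (Mx - mn).toNat with hR
    have hRcast : (R:ℤ) = Mx - mn := Int.toNat_of_nonneg (by linarith)
    have hRk : 2*R ≤ k := by omega
    set base : ZMod k := j 0 + ((mn : ℤ) : ZMod k) with hbase
    have hunvis : ∀ c : ZMod k, R < (c - base).val → M c = 0 := by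
      intro c hc
      by_contra hM0
      have hne : (Finset.univ.filter (fun i => j i = c)).Nonempty := by
        rw [← Finset.card_pos]
        have hrfl : M c = (Finset.univ.filter (fun i => j i = c)).card := rfl
        omega
      obtain ⟨i, hi⟩ := hne
      rw [Finset.mem_filter] at hi
      have hji : j i = c := hi.2
      have h1 := hWcast i.val
      rw [ZMod.natCast_rightInverse i, hji] at h1
      set x := W i.val - mn with hx
      have hx0 : 0 ≤ x := by
        have := hqle i.val (le_of_lt (ZMod.val_lt i)); rw [hx]; linarith
      have hxR : x ≤ (R:ℤ) := by
        have := hple i.val (le_of_lt (ZMod.val_lt i)); rw [hx, hRcast]; linarith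
      have h2 : c - base = ((x : ℤ) : ZMod k) := by
        rw [h1, hbase, hx]; push_cast; ring
      have h3 : ((x : ℤ) : ZMod k) = ((x.toNat : ℕ) : ZMod k) := by
        conv_lhs => rw [← Int.toNat_of_nonneg hx0]
        push_cast
        ring
      have htk : x.toNat < k := by omega
      have h4 : (c - base).val = x.toNat := by
        rw [h2, h3, ZMod.val_cast_of_lt htk]
      omega
    have hMstep : ∀ c : ZMod k, M c ≡ M (c - ((u:ℕ) : ZMod k)) [MOD u] := by
      intro c
      have k1 := key' c
      have k2 := key' (c - 1)
      obtain ⟨n, hn⟩ : ∃ n, u = n + 1 := ⟨u - 1, by omega⟩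
      have e1 : ∑ t ∈ Finset.range u, M (c - (t : ZMod k))
          = (∑ t ∈ Finset.range n, M ((c - 1) - (t : ZMod k))) + M c := by
        rw [hn, Finset.sum_range_succ']
        congr 1
        · apply Finset.sum_congr rfl
          intro t _
          congr 1
          push_cast
          ring
        · simp
      have e2 : ∑ t ∈ Finset.range u, M ((c - 1) - (t : ZMod k))
          = (∑ t ∈ Finset.range n, M ((c - 1) - (t : ZMod k))) + M (c - ((u:ℕ) : ZMod k)) := by
        rw [hn, Finset.sum_range_succ]
        congr 2
        push_cast
        ring
      rw [e1] at k1
      rw [e2] at k2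
      set A := ∑ t ∈ Finset.range n, M ((c - 1) - (t : ZMod k)) with hA
      apply (Nat.modEq_iff_dvd).mpr
      refine ⟨(N (c-1) : ℤ) - N c, ?_⟩
      have k1' : (u:ℤ) * (N c : ℤ) = (A : ℤ) + (M c : ℤ) := by exact_mod_cast k1
      have k2' : (u:ℤ) * (N (c-1) : ℤ) = (A : ℤ) + (M (c - ((u:ℕ):ZMod k)) : ℤ) := by
        exact_mod_cast k2
      linear_combination k1' - k2'
    have hMloop : ∀ (s : ℕ) (c : ZMod k), M c ≡ M (c - ((s * u : ℕ) : ZMod k)) [MOD u] := by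
      intro s
      induction s with
      | zero => intro c; simp [Nat.ModEq]
      | succ n ih =>
        intro c
        have h1 := hMstep c
        have h2 := ih (c - ((u:ℕ):ZMod k))
        have h3 : c - ((u:ℕ):ZMod k) - ((n*u:ℕ):ZMod k) = c - (((n+1)*u:ℕ):ZMod k) := by
          push_cast
          ring
        rw [h3] at h2
        exact h1.trans h2
    set g := Nat.gcd u k with hg
    have hgu : g ∣ u := Nat.gcd_dvd_left u k
    have hgk : g ∣ k := Nat.gcd_dvd_right u k
    have hg0 : 0 < g := Nat.gcd_pos_of_pos_left k (by omega)
    have h2g : 2 * g ≤ u := by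
      have hne : g ≠ u := fun h => hnd (h ▸ hgk)
      obtain ⟨t, ht⟩ := hgu
      rcases Nat.lt_or_ge t 2 with h | h
      · interval_cases t
        · simp at ht; omega
        · rw [mul_one] at ht; exact absurd ht.symm hne
      · calc 2 * g ≤ t * g := Nat.mul_le_mul_right g h
        _ = g * t := Nat.mul_comm t g
        _ = u := ht.symm
    have hbez : (u : ZMod k) * ((Nat.gcdA u k : ℤ) : ZMod k) = ((g:ℕ) : ZMod k) := by
      have h := Nat.gcd_eq_gcd_ab u k
      have h2 : ((Nat.gcd u k : ℤ) : ZMod k)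
          = (((u:ℤ) * Nat.gcdA u k + (k:ℤ) * Nat.gcdB u k : ℤ) : ZMod k) := by
        rw [← h]
      push_cast at h2
      rw [ZMod.natCast_self] at h2
      rw [hg]
      push_cast
      linear_combination -h2
    have hsolve : ∀ z : ℕ, g ∣ z → ∃ s : ℕ, ((s * u : ℕ) : ZMod k) = - ((z:ℕ) : ZMod k) := by
      intro z hz
      obtain ⟨m, hm⟩ := hz
      set SZ : ℤ := -((m : ℤ) * Nat.gcdA u k) with hSZ
      have hkne : ((k:ℕ):ℤ) ≠ 0 := by
        have : (0:ℤ) < (k:ℤ) := by exact_mod_cast hk0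
        omega
      have hnn : 0 ≤ SZ % (k:ℤ) := Int.emod_nonneg SZ hkne
      refine ⟨(SZ % (k:ℤ)).toNat, ?_⟩
      have hcast1 : (((SZ % (k:ℤ)).toNat : ℕ) : ZMod k) = ((SZ % (k:ℤ) : ℤ) : ZMod k) := by
        conv_rhs => rw [← Int.toNat_of_nonneg hnn]
        push_cast
        ring
      have hcast2 : ((SZ % (k:ℤ) : ℤ) : ZMod k) = ((SZ : ℤ) : ZMod k) := intCast_emod_zmod SZ
      push_cast
      rw [hcast1, hcast2, hSZ, hm]
      push_cast
      linear_combination (-(m : ZMod k)) * hbez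
    have hdvdM : ∀ c : ZMod k, u ∣ M c := by
      intro c
      set b := (c - base).val with hb
      rcases Nat.lt_or_ge R b with hcase | hcase
      · rw [hunvis c hcase]
        exact dvd_zero u
      · set q := (R - b)/g with hqdef
        set r := (R - b) % g with hrdef
        have hdm : g * q + r = R - b := Nat.div_add_mod _ _
        have hrl : r < g := Nat.mod_lt _ hg0
        set G := g * q with hG
        set y := b + (G + g) with hy
        have hy1 : R + 1 ≤ y := by omega
        have hy2 : y ≤ R + g := by omega
        have hyk : y < k := by omega
        have hdvd_yb : g ∣ y - b := ⟨q + 1, by rw [Nat.mul_succ, ← hG]; omega⟩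
        obtain ⟨s, hs⟩ := hsolve (y - b) hdvd_yb
        have htar := hMloop s c
        have hcb : ((b:ℕ) : ZMod k) = c - base := ZMod.natCast_rightInverse (c - base)
        have heq : c - ((s*u:ℕ) : ZMod k) = base + ((y:ℕ) : ZMod k) := by
          rw [hs]
          have h5 : ((y - b : ℕ) : ZMod k) = ((y:ℕ) : ZMod k) - ((b:ℕ):ZMod k) :=
            Nat.cast_sub (by omega : b ≤ y)
          rw [h5]
          linear_combination -hcb
        rw [heq] at htar
        have hval : (base + ((y:ℕ) : ZMod k) - base).val = y := by
          have h6 : base + ((y:ℕ):ZMod k) - base = ((y:ℕ):ZMod k) := by ring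
          rw [h6, ZMod.val_cast_of_lt hyk]
        have hM0 : M (base + ((y:ℕ):ZMod k)) = 0 := hunvis _ (by rw [hval]; omega)
        rw [hM0] at htar
        exact (Nat.modEq_zero_iff_dvd).mp htar
    have hfin : u ∣ k := by
      rw [← hsumM]
      exact Finset.dvd_sum (fun c _ => hdvdM c)
    exact hnd hfin
  · -- all +1
    have hall : ∀ m < k, D m = 1 := by
      by_contra hnall
      push_neg at hnall
      obtain ⟨m, hm, hmne⟩ := hnall
      have hlt : W k < ∑ m ∈ Finset.range k, (1:ℤ) := by
        apply Finset.sum_lt_sum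
        · intro i _
          rcases hDval i with h | h | h <;> omega
        · exact ⟨m, Finset.mem_range.mpr hm, by rcases hDval m with h | h | h <;> omega⟩
      rw [Finset.sum_const, Finset.card_range] at hlt
      simp only [nsmul_eq_mul, mul_one] at hlt
      omega
    have hWn : ∀ n ≤ k, W n = n := by
      intro n hn
      have : W n = ∑ m ∈ Finset.range n, (1:ℤ) := by
        apply Finset.sum_congr rfl
        intro m hm
        exact hall m (by rw [Finset.mem_range] at hm; omega)
      rw [this, Finset.sum_const, Finset.card_range]
      simp
    apply monotone_case (j 0) true
    intro i
    simp only [if_true]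
    have h1 := hWcast i.val
    rw [ZMod.natCast_rightInverse i, hWn i.val (le_of_lt (ZMod.val_lt i))] at h1
    rw [h1]
    congr 1
    push_cast
    rw [ZMod.natCast_rightInverse i]
  · -- all -1
    have hall : ∀ m < k, D m = -1 := by
      by_contra hnall
      push_neg at hnall
      obtain ⟨m, hm, hmne⟩ := hnall
      have hlt : ∑ m ∈ Finset.range k, (-1:ℤ) < W k := by
        apply Finset.sum_lt_sum
        · intro i _
          rcases hDval i with h | h | h <;> omega
        · exact ⟨m, Finset.mem_range.mpr hm, by rcases hDval m with h | h | h <;> omega⟩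
      rw [Finset.sum_const, Finset.card_range] at hlt
      simp only [nsmul_eq_mul, mul_neg_one] at hlt
      omega
    have hWn : ∀ n ≤ k, W n = -(n:ℤ) := by
      intro n hn
      have : W n = ∑ m ∈ Finset.range n, (-1:ℤ) := by
        apply Finset.sum_congr rfl
        intro m hm
        exact hall m (by rw [Finset.mem_range] at hm; omega)
      rw [this, Finset.sum_const, Finset.card_range]
      simp
    apply monotone_case (j 0) false
    intro i
    simp only [Bool.false_eq_true, if_false]
    have h1 := hWcast i.val
    rw [ZMod.natCast_rightInverse i, hWn i.val (le_of_lt (ZMod.val_lt i))] at h1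
    rw [h1]
    have h2 : (((-(i.val : ℤ)) : ℤ) : ZMod k) = -(((i.val : ℕ)) : ZMod k) := by push_cast; ring
    rw [h2, ZMod.natCast_rightInverse i]
    ring

lemma counting_key (huk : u < k)
    (f j : ZMod k → ZMod k)
    (H1 : ∀ i : ZMod k, Function.Injective fun t : Fin u => f (i + ((t : ℕ) : ZMod k)))
    (H2 : ∀ i x, (∃ t : Fin u, f (i + ((t : ℕ) : ZMod k)) = x) ↔ (x - j i).val < u) :
    ∀ c : ZMod k, u * (Finset.univ.filter (fun i => f i = c)).card
        = ∑ t ∈ Finset.range u, (Finset.univ.filter (fun i => j i = c - (t : ZMod k))).card := by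
  set N : ZMod k → ℕ := fun c => (Finset.univ.filter (fun i => f i = c)).card with hN
  set M : ZMod k → ℕ := fun c => (Finset.univ.filter (fun i => j i = c)).card with hM
  have window : ∀ (i c : ZMod k),
      ((Finset.range u).filter (fun t : ℕ => f (i + (t : ZMod k)) = c)).card
        = ((Finset.range u).filter (fun t : ℕ => j i + (t : ZMod k) = c)).card := by
    intro i c
    apply card_eq_of_le_one
    · rw [Finset.card_le_one]
      intro t1 h1 t2 h2
      rw [Finset.mem_filter, Finset.mem_range] at h1 h2
      have := H1 i (a₁ := ⟨t1, h1.1⟩) (a₂ := ⟨t2, h2.1⟩) (by simp only; rw [h1.2, h2.2])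
      simpa [Fin.mk.injEq] using this
    · rw [Finset.card_le_one]
      intro t1 h1 t2 h2
      rw [Finset.mem_filter, Finset.mem_range] at h1 h2
      have heq : ((t1 : ZMod k)) = (t2 : ZMod k) := add_left_cancel (h1.2.trans h2.2.symm)
      have := congrArg ZMod.val heq
      rwa [ZMod.val_cast_of_lt (lt_trans h1.1 huk), ZMod.val_cast_of_lt (lt_trans h2.1 huk)] at this
    · constructor
      · rintro ⟨t, ht⟩
        rw [Finset.mem_filter, Finset.mem_range] at ht
        have hex : ∃ t : Fin u, f (i + ((t : ℕ) : ZMod k)) = c := ⟨⟨t, ht.1⟩, ht.2⟩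
        have hv := (H2 i c).mp hex
        refine ⟨(c - j i).val, ?_⟩
        rw [Finset.mem_filter, Finset.mem_range]
        exact ⟨hv, by rw [ZMod.natCast_rightInverse (c - j i)]; ring⟩
      · rintro ⟨t, ht⟩
        rw [Finset.mem_filter, Finset.mem_range] at ht
        have hv : (c - j i).val < u := by
          have heq : c - j i = (t : ZMod k) := by rw [← ht.2]; ring
          rw [heq, ZMod.val_cast_of_lt (lt_trans ht.1 huk)]; exact ht.1
        obtain ⟨t', ht'⟩ := (H2 i c).mpr hv
        exact ⟨(t' : ℕ), by rw [Finset.mem_filter, Finset.mem_range]; exact ⟨t'.isLt, ht'⟩⟩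
  -- the counting identity
  have key : ∀ c : ZMod k, u * N c = ∑ t ∈ Finset.range u, M (c - (t : ZMod k)) := by
    intro c
    have e1 : ∀ t : ℕ, (Finset.univ.filter (fun i : ZMod k => f (i + (t : ZMod k)) = c)).card = N c := by
      intro t
      rw [hN]
      apply Finset.card_nbij (fun i => i + (t : ZMod k))
      · intro i hi
        simp only [Finset.mem_coe, Finset.mem_filter, Finset.mem_univ, true_and] at *
        exact hi
      · intro a _ b _ hab
        simpa using hab
      · intro x hx
        simp only [Finset.coe_filter, Finset.mem_univ, true_and, Set.mem_image,
          Set.mem_setOf_eq] at *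
        refine ⟨x - (t : ZMod k), ?_, by ring⟩
        have heq : x - (t : ZMod k) + (t : ZMod k) = x := by ring
        rw [heq]
        exact hx
    calc u * N c = ∑ _t ∈ Finset.range u, N c := by rw [Finset.sum_const, Finset.card_range]; ring
    _ = ∑ t ∈ Finset.range u, (Finset.univ.filter (fun i : ZMod k => f (i + (t : ZMod k)) = c)).card := by
        refine Finset.sum_congr rfl fun t _ => (e1 t).symm
    _ = ∑ t ∈ Finset.range u, ∑ i : ZMod k, (if f (i + (t : ZMod k)) = c then 1 else 0) := by
        refine Finset.sum_congr rfl fun t _ => ?_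
        rw [Finset.card_filter]
    _ = ∑ i : ZMod k, ∑ t ∈ Finset.range u, (if f (i + (t : ZMod k)) = c then 1 else 0) :=
        Finset.sum_comm
    _ = ∑ i : ZMod k, ((Finset.range u).filter (fun t : ℕ => f (i + (t : ZMod k)) = c)).card := by
        refine Finset.sum_congr rfl fun i _ => (Finset.card_filter _ _).symm
    _ = ∑ i : ZMod k, ((Finset.range u).filter (fun t : ℕ => j i + (t : ZMod k) = c)).card := by
        refine Finset.sum_congr rfl fun i _ => window i c
    _ = ∑ i : ZMod k, ∑ t ∈ Finset.range u, (if j i + (t : ZMod k) = c then 1 else 0) := by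
        refine Finset.sum_congr rfl fun i _ => Finset.card_filter _ _
    _ = ∑ t ∈ Finset.range u, ∑ i : ZMod k, (if j i + (t : ZMod k) = c then 1 else 0) :=
        Finset.sum_comm
    _ = ∑ t ∈ Finset.range u, M (c - (t : ZMod k)) := by
        refine Finset.sum_congr rfl fun t _ => ?_
        have hcond : ∀ i : ZMod k, (j i + (t : ZMod k) = c) = (j i = c - (t : ZMod k)) := by
          intro i
          simp only [eq_iff_iff]
          constructor
          · intro h; rw [← h]; ring
          · intro h; rw [h]; ring
        simp only [hcond]
        rw [← Finset.card_filter]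
    _ = ∑ t ∈ Finset.range u, M (c - (t : ZMod k)) := rfl
  exact key

lemma lemG (hu : 2 ≤ u) (huk : u < k) (hnd : ¬ u ∣ k)
    (f j : ZMod k → ZMod k)
    (H1 : ∀ i : ZMod k, Function.Injective fun t : Fin u => f (i + ((t : ℕ) : ZMod k)))
    (H2 : ∀ i x, (∃ t : Fin u, f (i + ((t : ℕ) : ZMod k)) = x) ↔ (x - j i).val < u) :
    Function.Bijective f ∧ Function.Bijective j := by
  rcases Nat.lt_or_ge (u+1) k with hk2 | hk1
  · exact case_big hu (by omega) hnd f j (step_lemma hu (by omega) f j H1 H2)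
      (counting_key huk f j H1 H2) (fun g hg => bij_of_fiber_one g hg)
  · exact case_ksucc hu (by omega) f j H1 H2

end main




variable {V : Type} [DecidableEq V]

/-- Let `2 ≤ u' < u < k` with `k` divisible by neither `u` nor `u'`, let `G = (V, E)` be a
`u'`-uniform `k`-circle-layered hypergraph, and let `G' = (V, E')` be the `u`-uniform
`k`-circle-layered hypergraph whose hyperedges are exactly the windows
`{v_i, ..., v_{i+u-1}}` (one vertex from each of `u` cyclically consecutive partitions)
such that `{v_i, ..., v_{i+u'-1}} ∈ E`.  Then `G'` contains a `k`-hypercycle iff `G` does. -/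
theorem stmt_3 (u' u k : ℕ)
    (hu' : 2 ≤ u') (h1 : u' < u) (h2 : u < k)
    (hnd : ¬ u ∣ k) (hnd' : ¬ u' ∣ k)
    (P : V → ZMod k) (E E' : Set (Finset V))
    (hunif : ∀ e ∈ E, e.card = u')
    (hlay : IsCircleLayered k u' P E)
    (hE' : E' = {e : Finset V | ∃ (i : ZMod k) (x : Fin u → V),
        (∀ t : Fin u, P (x t) = i + ((t : ℕ) : ZMod k)) ∧
        e = Finset.univ.image x ∧
        Finset.univ.image (fun t : Fin u' => x (Fin.castLE h1.le t)) ∈ E}) :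
    (∃ v : ZMod k → V, IsHypercycle k u E' v) ↔
      (∃ v : ZMod k → V, IsHypercycle k u' E v) := by
  haveI : NeZero k := ⟨by omega⟩
  have hvalcast : ∀ (a : ℕ), a < k → ((a : ZMod k)).val = a := fun a h => ZMod.val_cast_of_lt h
  constructor
  · -- forward : E' hypercycle → E hypercycle
    rintro ⟨v, hvinj, hvw⟩
    have hdata : ∀ i : ZMod k, ∃ (i₀ : ZMod k) (x : Fin u → V),
        (∀ t : Fin u, P (x t) = i₀ + ((t : ℕ) : ZMod k)) ∧
        cycWindow k u v i = Finset.univ.image x ∧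
        Finset.univ.image (fun t : Fin u' => x (Fin.castLE h1.le t)) ∈ E := by
      intro i
      have hmem := hvw i
      rw [hE'] at hmem
      exact hmem
    choose j x hPx himg hsub using hdata
    set f : ZMod k → ZMod k := fun i => P (v i) with hf
    -- membership helpers
    have hmem1 : ∀ (i : ZMod k) (t : Fin u), ∃ s : Fin u, x i s = v (i + ((t:ℕ) : ZMod k)) := by
      intro i t
      have : v (i + ((t:ℕ):ZMod k)) ∈ Finset.univ.image (x i) := by
        rw [← himg i]
        exact Finset.mem_image.mpr ⟨t, Finset.mem_univ t, rfl⟩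
      obtain ⟨s, _, hs⟩ := Finset.mem_image.mp this
      exact ⟨s, hs⟩
    have hmem2 : ∀ (i : ZMod k) (s : Fin u), ∃ t : Fin u, v (i + ((t:ℕ) : ZMod k)) = x i s := by
      intro i s
      have : x i s ∈ cycWindow k u v i := by
        rw [himg i]
        exact Finset.mem_image.mpr ⟨s, Finset.mem_univ s, rfl⟩
      obtain ⟨t, _, ht⟩ := Finset.mem_image.mp this
      exact ⟨t, ht⟩
    have H2 : ∀ i y, (∃ t : Fin u, f (i + ((t : ℕ) : ZMod k)) = y) ↔ (y - j i).val < u := by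
      intro i y
      constructor
      · rintro ⟨t, rfl⟩
        obtain ⟨s, hs⟩ := hmem1 i t
        have : f (i + ((t:ℕ):ZMod k)) = j i + ((s:ℕ):ZMod k) := by
          rw [hf]
          simp only
          rw [← hs, hPx i s]
        rw [this]
        have heq : j i + ((s:ℕ):ZMod k) - j i = ((s:ℕ):ZMod k) := by ring
        rw [heq, hvalcast _ (by omega)]
        exact s.isLt
      · intro hy
        obtain ⟨t, ht⟩ := hmem2 i ⟨(y - j i).val, hy⟩
        refine ⟨t, ?_⟩
        rw [hf]
        simp only
        rw [ht, hPx i _]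
        simp only
        rw [ZMod.natCast_rightInverse (y - j i)]
        ring
    have H1 : ∀ i : ZMod k, Function.Injective fun t : Fin u => f (i + ((t : ℕ) : ZMod k)) := by
      intro i t1 t2 h12
      simp only at h12
      obtain ⟨s1, hs1⟩ := hmem1 i t1
      obtain ⟨s2, hs2⟩ := hmem1 i t2
      have hP12 : j i + ((s1:ℕ):ZMod k) = j i + ((s2:ℕ):ZMod k) := by
        rw [← hPx i s1, ← hPx i s2, hs1, hs2]
        exact h12
      have hs12 : s1 = s2 := by
        have := add_left_cancel hP12
        have hv := congrArg ZMod.val this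
        rw [hvalcast _ (by omega), hvalcast _ (by omega)] at hv
        exact Fin.ext hv
      have hveq : v (i + ((t1:ℕ):ZMod k)) = v (i + ((t2:ℕ):ZMod k)) := by
        rw [← hs1, ← hs2, hs12]
      have := hvinj hveq
      have h3 : ((t1:ℕ):ZMod k) = ((t2:ℕ):ZMod k) := by
        have h4 := this
        have : i + ((t1:ℕ):ZMod k) - i = i + ((t2:ℕ):ZMod k) - i := by rw [h4]
        simpa using this
      have hv := congrArg ZMod.val h3
      rw [hvalcast _ (by omega), hvalcast _ (by omega)] at hv
      exact Fin.ext hv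
    obtain ⟨hfb, hjb⟩ := lemG (by omega : 2 ≤ u) h2 hnd f j H1 H2
    set φ := Equiv.ofBijective f hfb with hφ
    set v' : ZMod k → V := fun c => v (φ.symm c) with hv'
    refine ⟨v', hvinj.comp φ.symm.injective, ?_⟩
    intro c
    obtain ⟨i, hi⟩ := hjb.2 c
    have hwin : cycWindow k u' v' c = Finset.univ.image (fun t : Fin u' => x i (Fin.castLE h1.le t)) := by
      apply Finset.ext
      intro w
      simp only [cycWindow, Finset.mem_image, Finset.mem_univ, true_and]
      constructor
      · rintro ⟨s, rfl⟩
        have hvval : ((c + ((s:ℕ):ZMod k)) - j i).val < u := by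
          rw [hi]
          have heq : c + ((s:ℕ):ZMod k) - c = ((s:ℕ):ZMod k) := by ring
          rw [heq, hvalcast _ (by omega)]
          omega
        obtain ⟨t, ht⟩ := (H2 i _).mpr hvval
        have hsymm : φ.symm (c + ((s:ℕ):ZMod k)) = i + ((t:ℕ):ZMod k) := by
          apply φ.injective
          rw [Equiv.apply_symm_apply]
          exact ht.symm
        obtain ⟨s', hs'⟩ := hmem1 i t
        have hPs' : j i + ((s' : ℕ) : ZMod k) = c + ((s:ℕ):ZMod k) := by
          rw [← hPx i s', hs']
          exact ht
        have hs'val : (s' : ℕ) = (s : ℕ) := by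
          rw [hi] at hPs'
          have := add_left_cancel hPs'
          have hv := congrArg ZMod.val this
          rwa [hvalcast _ (by omega), hvalcast _ (by omega)] at hv
        refine ⟨s, ?_⟩
        have hcast : Fin.castLE h1.le s = s' := Fin.ext (by rw [Fin.coe_castLE]; exact hs'val.symm)
        rw [hcast, hs', hv']
        simp only
        rw [hsymm]
      · rintro ⟨s, rfl⟩
        obtain ⟨t, ht⟩ := hmem2 i (Fin.castLE h1.le s)
        have hft : f (i + ((t:ℕ):ZMod k)) = c + ((s:ℕ):ZMod k) := by
          rw [hf]
          simp only
          rw [ht, hPx i _]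
          rw [hi]
          congr 1
        have hsymm : φ.symm (c + ((s:ℕ):ZMod k)) = i + ((t:ℕ):ZMod k) := by
          apply φ.injective
          rw [Equiv.apply_symm_apply]
          exact hft.symm
        refine ⟨s, ?_⟩
        rw [hv']
        simp only
        rw [hsymm, ht]
    rw [hwin]
    exact hsub i
  · -- backward : E hypercycle → E' hypercycle
    rintro ⟨v, hvinj, hvw⟩
    set f : ZMod k → ZMod k := fun i => P (v i) with hf
    have hdata : ∀ i : ZMod k, ∃ i₀ : ZMod k, ∀ t : Fin u',
        ∃! w, w ∈ cycWindow k u' v i ∧ P w = i₀ + ((t:ℕ) : ZMod k) :=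
      fun i => hlay _ (hvw i)
    choose j hj using hdata
    choose wit hwit using fun i t => (hj i t)
    -- hwit i t : (wit i t ∈ window ∧ P (wit i t) = j i + t) ∧ ∀ y, ... → y = wit i t
    have hwmem : ∀ i t, wit i t ∈ cycWindow k u' v i := fun i t => (hwit i t).1.1
    have hwP : ∀ i t, P (wit i t) = j i + ((t:ℕ):ZMod k) := fun i t => (hwit i t).1.2
    have hwuniq : ∀ (i : ZMod k) (t : Fin u') (y : V), y ∈ cycWindow k u' v i → P y = j i + ((t:ℕ):ZMod k) → y = wit i t :=
      fun i t y h1' h2' => (hwit i t).2 y ⟨h1', h2'⟩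
    -- exhaustion: every element of the window is a witness
    have hexh : ∀ i : ZMod k, ∀ w ∈ cycWindow k u' v i, ∃ t : Fin u', w = wit i t := by
      intro i w hw
      have hinjwit : Function.Injective (wit i) := by
        intro t1 t2 h12
        have := congrArg P h12
        rw [hwP i t1, hwP i t2] at this
        have := add_left_cancel this
        have hv := congrArg ZMod.val this
        rw [hvalcast _ (by omega), hvalcast _ (by omega)] at hv
        exact Fin.ext hv
      have hsub1 : Finset.univ.image (wit i) ⊆ cycWindow k u' v i := by
        intro y hy
        obtain ⟨t, _, ht⟩ := Finset.mem_image.mp hy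
        exact ht ▸ hwmem i t
      have hcard : (cycWindow k u' v i).card ≤ (Finset.univ.image (wit i)).card := by
        rw [Finset.card_image_of_injective _ hinjwit, Finset.card_univ, Fintype.card_fin]
        rw [hunif _ (hvw i)]
      have := Finset.eq_of_subset_of_card_le hsub1 hcard
      rw [← this] at hw
      obtain ⟨t, _, ht⟩ := Finset.mem_image.mp hw
      exact ⟨t, ht.symm⟩
    have hvmem : ∀ (i : ZMod k) (t : Fin u'), v (i + ((t:ℕ):ZMod k)) ∈ cycWindow k u' v i :=
      fun i t => Finset.mem_image.mpr ⟨t, Finset.mem_univ t, rfl⟩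
    have H2 : ∀ i y, (∃ t : Fin u', f (i + ((t : ℕ) : ZMod k)) = y) ↔ (y - j i).val < u' := by
      intro i y
      constructor
      · rintro ⟨t, rfl⟩
        obtain ⟨s, hs⟩ := hexh i _ (hvmem i t)
        have : f (i + ((t:ℕ):ZMod k)) = j i + ((s:ℕ):ZMod k) := by
          rw [hf]; simp only; rw [hs, hwP]
        rw [this]
        have heq : j i + ((s:ℕ):ZMod k) - j i = ((s:ℕ):ZMod k) := by ring
        rw [heq, hvalcast _ (by omega)]
        exact s.isLt
      · intro hy
        set t : Fin u' := ⟨(y - j i).val, hy⟩ with hts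
        have hwin : wit i t ∈ cycWindow k u' v i := hwmem i t
        obtain ⟨s, _, hs⟩ := Finset.mem_image.mp hwin
        refine ⟨s, ?_⟩
        rw [hf]; simp only
        rw [hs, hwP i t, hts]
        simp only
        rw [ZMod.natCast_rightInverse (y - j i)]
        ring
    have H1 : ∀ i : ZMod k, Function.Injective fun t : Fin u' => f (i + ((t : ℕ) : ZMod k)) := by
      intro i t1 t2 h12
      simp only at h12
      set y := f (i + ((t2:ℕ):ZMod k)) with hy
      have hyv : (y - j i).val < u' := (H2 i y).mp ⟨t2, rfl⟩
      set s : Fin u' := ⟨(y - j i).val, hyv⟩ with hss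
      have hPs : j i + ((s:ℕ):ZMod k) = y := by
        rw [hss]
        simp only
        rw [ZMod.natCast_rightInverse (y - j i)]
        ring
      have he1 : v (i + ((t1:ℕ):ZMod k)) = wit i s :=
        hwuniq i s _ (hvmem i t1) (by rw [hPs]; exact h12)
      have he2 : v (i + ((t2:ℕ):ZMod k)) = wit i s :=
        hwuniq i s _ (hvmem i t2) (by rw [hPs])
      have := hvinj (he1.trans he2.symm)
      have h3 : ((t1:ℕ):ZMod k) = ((t2:ℕ):ZMod k) := by
        have h4 : i + ((t1:ℕ):ZMod k) - i = i + ((t2:ℕ):ZMod k) - i := by rw [this]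
        simpa using h4
      have hv := congrArg ZMod.val h3
      rw [hvalcast _ (by omega), hvalcast _ (by omega)] at hv
      exact Fin.ext hv
    obtain ⟨hfb, hjb⟩ := lemG hu' (by omega : u' < k) hnd' f j H1 H2
    set φ := Equiv.ofBijective f hfb with hφ
    set v'' : ZMod k → V := fun c => v (φ.symm c) with hv''
    have hPv'' : ∀ c, P (v'' c) = c := fun c => φ.apply_symm_apply c
    have claimA : ∀ c : ZMod k, cycWindow k u' v'' c ∈ E := by
      intro c
      obtain ⟨i, hi⟩ := hjb.2 c
      have hwin : cycWindow k u' v'' c = cycWindow k u' v i := by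
        apply Finset.ext
        intro w
        simp only [cycWindow, Finset.mem_image, Finset.mem_univ, true_and]
        constructor
        · rintro ⟨s, rfl⟩
          have hvval : ((c + ((s:ℕ):ZMod k)) - j i).val < u' := by
            rw [hi]
            have heq : c + ((s:ℕ):ZMod k) - c = ((s:ℕ):ZMod k) := by ring
            rw [heq, hvalcast _ (by omega)]
            exact s.isLt
          obtain ⟨t, ht⟩ := (H2 i _).mpr hvval
          have hsymm : φ.symm (c + ((s:ℕ):ZMod k)) = i + ((t:ℕ):ZMod k) := by
            apply φ.injective
            rw [Equiv.apply_symm_apply]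
            exact ht.symm
          exact ⟨t, by rw [hv'']; simp only; rw [hsymm]⟩
        · rintro ⟨t, rfl⟩
          set y := f (i + ((t:ℕ):ZMod k)) with hy
          have hyv : (y - j i).val < u' := (H2 i y).mp ⟨t, rfl⟩
          set s : Fin u' := ⟨(y - j i).val, hyv⟩ with hss
          have hcs : c + ((s:ℕ):ZMod k) = y := by
            rw [hss]
            simp only
            rw [ZMod.natCast_rightInverse (y - j i), hi]
            ring
          have hsymm : φ.symm (c + ((s:ℕ):ZMod k)) = i + ((t:ℕ):ZMod k) := by
            apply φ.injective
            rw [Equiv.apply_symm_apply, hcs]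
            exact hy
          exact ⟨s, by rw [hv'']; simp only; rw [hsymm]⟩
      rw [hwin]
      exact hvw i
    refine ⟨v'', hvinj.comp φ.symm.injective, ?_⟩
    intro i
    rw [hE']
    refine ⟨i, fun t : Fin u => v'' (i + ((t:ℕ):ZMod k)), fun t => hPv'' _, rfl, ?_⟩
    exact claimA i
end

section
/- Let 2 ≤ u ≤ k and let G be a u-uniform hypergraph on n vertices containing a k-hypercycle. Assign each vertex of G independently and uniformly at random to one of k partitions V_1, ..., V_k, and let G~ be the u-uniform k-circle-layered hypergraph on the same vertex set obtained by keeping exactly those hyperedges of G that consist of one vertex from each of u cyclically consecutive partitions. Then: (i) every k-hypercycle of G~ is a k-hypercycle of G; and (ii) the probability that G~ contains a k-hypercycle is at least k^{-k}. -/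
variable {V : Type} [DecidableEq V]

/-- Given a coloring (random partition assignment) `c : V → ZMod k`, the hyperedges of `E`
that are kept in the colored graph `G~`: those consisting of exactly one vertex from each
of `u` cyclically consecutive partitions. -/
def circleEdges (k u : ℕ) (c : V → ZMod k) (E : Set (Finset V)) : Set (Finset V) :=
  {e ∈ E | ∃ i : ZMod k, ∀ t : Fin u, ∃! w, w ∈ e ∧ c w = i + ((t : ℕ) : ZMod k)}

lemma key_lemma (u k : ℕ) [NeZero k] (huk : u ≤ k)
    (E : Set (Finset V)) (v : ZMod k → V) (hv : IsHypercycle k u E v)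
    (c : V → ZMod k) (hc : ∀ i, c (v i) = i) :
    IsHypercycle k u (circleEdges k u c E) v := by
  refine ⟨hv.1, fun j => ⟨hv.2 j, j, fun t => ?_⟩⟩
  refine ⟨v (j + ((t : ℕ) : ZMod k)), ⟨?_, hc _⟩, ?_⟩
  · exact Finset.mem_image.2 ⟨t, Finset.mem_univ _, rfl⟩
  · rintro w ⟨hwmem, hwc⟩
    obtain ⟨s, -, rfl⟩ := Finset.mem_image.1 hwmem
    rw [hc] at hwc
    have h2 : ((s : ℕ) : ZMod k) = ((t : ℕ) : ZMod k) := add_left_cancel hwc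
    have hs : (s : ℕ) = (t : ℕ) := by
      have := congrArg ZMod.val h2
      rwa [ZMod.val_natCast_of_lt (lt_of_lt_of_le s.2 huk),
        ZMod.val_natCast_of_lt (lt_of_lt_of_le t.2 huk)] at this
    rw [congrArg (fun n : ℕ => v (j + (n : ZMod k))) hs]

/-- Color coding: if a `u`-uniform hypergraph `G` on a finite vertex set contains a
`k`-hypercycle, then (i) for every coloring `c`, every `k`-hypercycle of the colored graph
`G~` (with edge set `circleEdges k u c E`) is a `k`-hypercycle of `G`; and (ii) the
fraction of the `k^|V|` uniformly random colorings `c` for which `G~` contains a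
`k`-hypercycle is at least `k^{-k}`. -/
theorem stmt_9 [Fintype V] (u k : ℕ) [NeZero k] (hu : 2 ≤ u) (huk : u ≤ k)
    (E : Set (Finset V)) (hunif : ∀ e ∈ E, e.card = u)
    (hcyc : ∃ v : ZMod k → V, IsHypercycle k u E v) :
    (∀ (c : V → ZMod k) (v : ZMod k → V),
        IsHypercycle k u (circleEdges k u c E) v → IsHypercycle k u E v) ∧
    ((k : ℝ) ^ k)⁻¹ ≤
      (Nat.card {c : V → ZMod k |
          ∃ v : ZMod k → V, IsHypercycle k u (circleEdges k u c E) v} : ℝ) /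
        (k : ℝ) ^ (Fintype.card V) := by
  classical
  obtain ⟨v, hv⟩ := hcyc
  constructor
  · rintro c w ⟨hinj, hw⟩
    exact ⟨hinj, fun i => (hw i).1⟩
  · set S : Set (V → ZMod k) :=
      {c : V → ZMod k | ∃ v : ZMod k → V, IsHypercycle k u (circleEdges k u c E) v} with hS
    set n := Fintype.card V with hn
    have hkn : k ≤ n := by
      have := Fintype.card_le_of_injective v hv.1
      rwa [ZMod.card] at this
    -- injection from colorings of the complement of range v into S
    set g : ((↥(Set.range v)ᶜ) → ZMod k) → (V → ZMod k) :=
      fun f x => if h : x ∈ Set.range v then h.choose else f ⟨x, h⟩ with hg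
    have hgv : ∀ f i, g f (v i) = i := by
      intro f i
      have h : v i ∈ Set.range v := ⟨i, rfl⟩
      simp only [hg, dif_pos h]
      exact hv.1 h.choose_spec
    have hgS : ∀ f, g f ∈ S := fun f =>
      ⟨v, key_lemma u k huk E v hv (g f) (hgv f)⟩
    have hginj : Function.Injective g := by
      intro f f' hff
      funext x
      have hx : x.1 ∉ Set.range v := x.2
      have := congrFun hff x.1
      simpa only [hg, dif_neg hx] using this
    have hcard : k ^ (n - k) ≤ Nat.card S := by
      have h1 : Nat.card ((↥(Set.range v)ᶜ) → ZMod k) ≤ Nat.card S :=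
        Nat.card_le_card_of_injective (fun f => ⟨g f, hgS f⟩)
          (fun f f' h => hginj (congrArg Subtype.val h))
      have h2 : Nat.card ((↥(Set.range v)ᶜ) → ZMod k) = k ^ (n - k) := by
        rw [Nat.card_fun, Nat.card_eq_fintype_card, Nat.card_eq_fintype_card,
          ZMod.card, Fintype.card_compl_set,
          Fintype.card_congr (Equiv.ofInjective v hv.1).symm, ZMod.card]
      omega
    have hk0 : (0 : ℝ) < (k : ℝ) := by
      exact_mod_cast Nat.pos_of_ne_zero (NeZero.ne k)
    rw [le_div_iff₀ (by positivity)]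
    calc ((k : ℝ) ^ k)⁻¹ * (k : ℝ) ^ n = (k : ℝ) ^ (n - k) := by
          rw [pow_sub₀ _ (ne_of_gt hk0) hkn]; ring
      _ ≤ (Nat.card S : ℝ) := by exact_mod_cast hcard
end

section
/- Let u ≥ 2 and let k ≥ u be an integer that is not divisible by u. Let G be the complete u-partite u-uniform hypergraph: its vertex set is a disjoint union of nonempty parts W_1, ..., W_u and its hyperedges are exactly the sets containing one vertex from each part. Then G contains no k-hypercycle. -/
variable {V : Type} [DecidableEq V]

/-- Let `u ≥ 2` and let `k ≥ u` not be divisible by `u`.  The complete `u`-partite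
`u`-uniform hypergraph (parts given by `part : V → Fin u`, all parts nonempty, and whose
hyperedges are exactly the sets containing one vertex from each part) contains no
`k`-hypercycle. -/
theorem stmt_14 (u k : ℕ) (hu : 2 ≤ u) (huk : u ≤ k) (hnd : ¬ u ∣ k)
    (part : V → Fin u) (hne : ∀ j : Fin u, ∃ w : V, part w = j) :
    ¬ ∃ v : ZMod k → V, IsHypercycle k u
        {e : Finset V | ∀ j : Fin u, ∃! w, w ∈ e ∧ part w = j} v := by
  rintro ⟨v, hinj, hE⟩
  haveI : NeZero k := ⟨by omega⟩
  -- colors within each window are pairwise distinct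
  have hwin : ∀ i : ZMod k,
      Function.Injective (fun t : Fin u => part (v (i + ((t : ℕ) : ZMod k)))) := by
    intro i t1 t2 h
    obtain ⟨w, hw, huniq⟩ := hE i (part (v (i + ((t1 : ℕ) : ZMod k))))
    have h1 : v (i + ((t1 : ℕ) : ZMod k)) = w := by
      refine huniq _ ⟨?_, rfl⟩
      simp [cycWindow]
    have h2 : v (i + ((t2 : ℕ) : ZMod k)) = w := by
      refine huniq _ ⟨?_, ?_⟩
      · simp [cycWindow]
      · exact h.symm
    have h3 : ((t1 : ℕ) : ZMod k) = ((t2 : ℕ) : ZMod k) :=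
      add_left_cancel (hinj (h1.trans h2.symm))
    have h4 := congrArg ZMod.val h3
    have ht1 := t1.isLt
    have ht2 := t2.isLt
    rw [ZMod.val_natCast_of_lt (by omega), ZMod.val_natCast_of_lt (by omega)] at h4
    exact Fin.ext h4
  have hsurj : ∀ i : ZMod k,
      Function.Surjective (fun t : Fin u => part (v (i + ((t : ℕ) : ZMod k)))) := fun i =>
    Finite.surjective_of_injective (hwin i)
  -- periodicity with period u
  have hper : ∀ i : ZMod k, part (v (i + (u : ZMod k))) = part (v i) := by
    intro i
    obtain ⟨t, ht⟩ := hsurj (i + 1) (part (v i))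
    simp only at ht
    by_cases hcase : (t : ℕ) + 1 < u
    · exfalso
      have h0 : part (v (i + (((⟨(t : ℕ) + 1, hcase⟩ : Fin u) : ℕ) : ZMod k)))
          = part (v (i + (((⟨0, by omega⟩ : Fin u) : ℕ) : ZMod k))) := by
        show part (v (i + (((t : ℕ) + 1 : ℕ) : ZMod k))) = part (v (i + ((0 : ℕ) : ZMod k)))
        have e1 : i + 1 + ((t : ℕ) : ZMod k) = i + (((t : ℕ) + 1 : ℕ) : ZMod k) := by
          push_cast; ring
        rw [← e1]
        simpa using ht
      have hfin : (⟨(t : ℕ) + 1, hcase⟩ : Fin u) = ⟨0, by omega⟩ := hwin i h0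
      simp [Fin.ext_iff] at hfin
    · have htu : (t : ℕ) + 1 = u := by have := t.isLt; omega
      have hc : (u : ZMod k) = (((t : ℕ) + 1 : ℕ) : ZMod k) :=
        congrArg (fun n : ℕ => (n : ZMod k)) htu.symm
      have e1 : i + 1 + ((t : ℕ) : ZMod k) = i + (u : ZMod k) := by
        rw [hc]; push_cast; ring
      rw [← e1]
      exact ht
  -- periodicity under integer multiples of u
  have hmul : ∀ (n : ℤ) (i : ZMod k), part (v (i + (u : ZMod k) * (n : ZMod k))) = part (v i) := by
    intro n
    induction n using Int.induction_on with
    | zero => intro i; simp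
    | succ n ih =>
        intro i
        have : i + (u : ZMod k) * (((n : ℤ) + 1 : ℤ) : ZMod k)
            = (i + (u : ZMod k) * ((n : ℤ) : ZMod k)) + (u : ZMod k) := by
          push_cast; ring
        rw [this, hper, ih]
    | pred n ih =>
        intro i
        have key := hper (i + (u : ZMod k) * ((-(n : ℤ) - 1 : ℤ) : ZMod k))
        have e : i + (u : ZMod k) * ((-(n : ℤ) - 1 : ℤ) : ZMod k) + (u : ZMod k)
            = i + (u : ZMod k) * ((-(n : ℤ) : ℤ) : ZMod k) := by
          push_cast; ring
        rw [e, ih] at key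
        exact key.symm
  -- gcd
  set d := Nat.gcd u k with hd
  have hd1 : 1 ≤ d := Nat.gcd_pos_of_pos_left k (by omega)
  have hdu : d < u := by
    have hdvd : d ∣ u := Nat.gcd_dvd_left u k
    have : d ≠ u := by
      intro h
      exact hnd (h ▸ Nat.gcd_dvd_right u k)
    exact lt_of_le_of_ne (Nat.le_of_dvd (by omega) hdvd) this
  -- Bezout: (d : ZMod k) = u * gcdA
  have hbez : ((d : ℕ) : ZMod k) = (u : ZMod k) * ((Nat.gcdA u k : ℤ) : ZMod k) := by
    have := Nat.gcd_eq_gcd_ab u k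
    have h2 : ((Nat.gcd u k : ℤ) : ZMod k)
        = (((u : ℤ) * Nat.gcdA u k + (k : ℤ) * Nat.gcdB u k : ℤ) : ZMod k) := by
      exact_mod_cast congrArg (fun z : ℤ => (z : ZMod k)) this
    push_cast at h2 ⊢
    simpa [ZMod.natCast_self] using h2
  have hcd : part (v ((0 : ZMod k) + ((d : ℕ) : ZMod k))) = part (v (0 : ZMod k)) := by
    rw [hbez]
    exact hmul _ 0
  have e0 : part (v ((0 : ZMod k) + (((⟨d, hdu⟩ : Fin u) : ℕ) : ZMod k)))
      = part (v ((0 : ZMod k) + (((⟨0, by omega⟩ : Fin u) : ℕ) : ZMod k))) := by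
    simpa using hcd
  have hfin : (⟨d, hdu⟩ : Fin u) = ⟨0, by omega⟩ := hwin 0 e0
  rw [Fin.mk.injEq] at hfin
  omega
end
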